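/- Let M be a lattice path matroid with path order e_1 < e_2 < ⋯ < e_n and corresponding interval presentation (J_1,…,J_r) with J_i = [a_i, b_i]. Then M is connected if and only if a_1 = e_1, b_r = e_n, and a_{i+1} ≤ b_i for all i with 1 ≤ i < r. -/

import Mathlib

open Matroid Set

namespace Matroid

variable {α : Type*}

/-- Deletion of a set of elements from a matroid. -/
def del (M : Matroid α) (D : Set α) : Matroid α := M ↾ (M.E \ D)

/-- Contraction of a set of elements, defined via duality: `M ／ C = (M✶ ＼ C)✶`. -/
def con (M : Matroid α) (C : Set α) : Matroid α := (M✶.del C)✶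

/-- `N` is a minor of `M` if `N` arises from `M` by a contraction followed by a deletion. -/
def IsMinorOf (N M : Matroid α) : Prop :=
  ∃ C D : Set α, Disjoint C D ∧ N = (M.con C).del D

/-- A circuit is a minimal dependent set. -/
def IsCircuit' (M : Matroid α) (C : Set α) : Prop :=
  M.Dep C ∧ ∀ D, M.Dep D → D ⊆ C → D = C

/-- A spanning circuit is a circuit whose closure is the ground set. -/
def IsSpanningCircuit (M : Matroid α) (C : Set α) : Prop :=
  M.IsCircuit' C ∧ M.Spanning C

/-- Two elements of a matroid are connected if they are equal or lie on a common circuit. -/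
def ConnTo (M : Matroid α) (x y : α) : Prop :=
  (x = y ∧ x ∈ M.E) ∨ ∃ C, M.IsCircuit' C ∧ x ∈ C ∧ y ∈ C

/-- A matroid is connected if its ground set is nonempty and every two elements of the
ground set are connected. -/
def IsConnected (M : Matroid α) : Prop :=
  M.E.Nonempty ∧ ∀ ⦃x y : α⦄, x ∈ M.E → y ∈ M.E → M.ConnTo x y

/-- A loop: an element whose singleton is dependent. -/
def IsLoop' (M : Matroid α) (x : α) : Prop := x ∈ M.E ∧ ¬ M.Indep {x}

/-- The rank of a set `X` in a matroid: the maximum cardinality of an independent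
subset of `X` (for finite matroids). -/
noncomputable def rkOf (M : Matroid α) (X : Set α) : ℕ :=
  sSup {k | ∃ I ⊆ X, M.Indep I ∧ I.ncard = k}

/-- The nullity of a set `X`: `η(X) = |X| − r(X)`. -/
noncomputable def etaOf (M : Matroid α) (X : Set α) : ℕ := X.ncard - M.rkOf X

/-- A flat is connected if the corresponding restriction is a connected matroid. -/
def ConnectedFlat (M : Matroid α) (F : Set α) : Prop :=
  M.IsFlat F ∧ (M ↾ F).IsConnected

/-- A pnc-flat: a proper nontrivial (i.e. dependent) connected flat. -/
def PncFlat (M : Matroid α) (F : Set α) : Prop :=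
  M.IsFlat F ∧ F ⊂ M.E ∧ M.Dep F ∧ (M ↾ F).IsConnected

/-- A fundamental flat: a pnc-flat `F` such that `F ∩ C` is a basis of `F`
for some spanning circuit `C` of the matroid. -/
def FundFlat (M : Matroid α) (F : Set α) : Prop :=
  M.PncFlat F ∧ ∃ C, M.IsSpanningCircuit C ∧ M.IsBasis (F ∩ C) F

end Matroid

/-- `X` is a partial transversal of the family `J`. -/
def IsPartialTransversal {α : Type*} {r : ℕ} (J : Fin r → Set α) (X : Set α) : Prop :=
  ∃ f : α → Fin r, Set.InjOn f X ∧ ∀ x ∈ X, x ∈ J (f x)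

/-- The family `J` is a presentation of the transversal matroid `M`: a set `X ⊆ E(M)` is
independent in `M` iff it is a partial transversal of `J`. -/
def IsPresentationOf {α : Type*} {r : ℕ} (J : Fin r → Set α) (M : Matroid α) : Prop :=
  (∀ i, J i ⊆ M.E) ∧ ∀ X ⊆ M.E, (M.Indep X ↔ IsPartialTransversal J X)

/-- An interval presentation of `M` with respect to a path order: `e` enumerates the ground
set in the path order, and the presentation consists of the intervals `[a i, b i]`, where
the `a i` are strictly increasing, the `b i` are strictly increasing and `a i ≤ b i`. -/
structure IntervalPres {α : Type*} (M : Matroid α) (n r : ℕ) where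
  e : Fin n → α
  inj : Function.Injective e
  ground : Set.range e = M.E
  a : Fin r → Fin n
  b : Fin r → Fin n
  ha : StrictMono a
  hb : StrictMono b
  hab : ∀ i, a i ≤ b i
  pres : IsPresentationOf (fun i => e '' Set.Icc (a i) (b i)) M

/-- The `i`-th interval of an interval presentation. -/
def IntervalPres.J {α : Type*} {M : Matroid α} {n r : ℕ}
    (P : IntervalPres M n r) (i : Fin r) : Set α :=
  P.e '' Set.Icc (P.a i) (P.b i)

/-- A lattice path matroid: a matroid admitting an interval presentation. -/
def IsLPM {α : Type*} (M : Matroid α) : Prop :=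
  ∃ n r : ℕ, Nonempty (IntervalPres M n r)

/-- A terminal element: one that is least or greatest in some path order. -/
def IsTerminal {α : Type*} (M : Matroid α) (x : α) : Prop :=
  ∃ (n r : ℕ) (P : IntervalPres M n r) (i : Fin n),
    P.e i = x ∧ (i.1 = 0 ∨ i.1 = n - 1)

/-- A nested matroid: a lattice path matroid with an interval presentation in which the set
of lower endpoints, or the set of upper endpoints, is an interval in the path order. -/
def IsNested {α : Type*} (M : Matroid α) : Prop :=
  ∃ (n r : ℕ) (P : IntervalPres M n r),
    (Set.range P.a).OrdConnected ∨ (Set.range P.b).OrdConnected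

/-- `M` is (isomorphic to) the uniform matroid `U_{r,k}`: `k` elements, and the independent
sets are exactly the subsets of the ground set with at most `r` elements. -/
def IsUniformOf {α : Type*} (M : Matroid α) (r k : ℕ) : Prop :=
  M.E.Finite ∧ M.E.ncard = k ∧ ∀ I ⊆ M.E, (M.Indep I ↔ I.ncard ≤ r)

/-- `M` is (isomorphic to) an `n`-element circuit `U_{n-1,n}`. -/
def IsCircuitMatroidOf {α : Type*} (M : Matroid α) (n : ℕ) : Prop :=
  IsUniformOf M (n - 1) n

/-- `N` is the truncation of `M` to rank `k`. -/
def IsTruncationOf {α : Type*} (N M : Matroid α) (k : ℕ) : Prop :=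
  N.E = M.E ∧ ∀ I, N.Indep I ↔ (M.Indep I ∧ I.ncard ≤ k)

/-- `N` is the direct sum of `M₁` and `M₂`. -/
def IsDirectSumOf {α : Type*} (N M₁ M₂ : Matroid α) : Prop :=
  Disjoint M₁.E M₂.E ∧ N.E = M₁.E ∪ M₂.E ∧
    ∀ I, N.Indep I ↔ (I ⊆ N.E ∧ M₁.Indep (I ∩ M₁.E) ∧ M₂.Indep (I ∩ M₂.E))

/-- `N` is the parallel connection `P_x(M₁, M₂)`, described by its bases. -/
def IsParallelConnOf {α : Type*} (N M₁ M₂ : Matroid α) (x : α) : Prop :=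
  M₁.E ∩ M₂.E = {x} ∧ ¬ (M₁.IsLoop' x ∧ M₂.IsLoop' x) ∧ N.E = M₁.E ∪ M₂.E ∧
    ∀ B, N.IsBase B ↔
      ((x ∈ B ∧ M₁.IsBase (B ∩ M₁.E) ∧ M₂.IsBase (B ∩ M₂.E)) ∨
       (x ∉ B ∧ ((M₁.IsBase (B ∩ M₁.E) ∧ M₂.IsBase ((B ∩ M₂.E) ∪ {x})) ∨
                 (M₂.IsBase (B ∩ M₂.E) ∧ M₁.IsBase ((B ∩ M₁.E) ∪ {x})))))

/-- `N` is the free extension `M + x` of `M` by the element `x`. -/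
def IsFreeExtOf {α : Type*} (N M : Matroid α) (x : α) : Prop :=
  x ∉ M.E ∧ N.E = insert x M.E ∧
    ∀ I, N.Indep I ↔ (I ⊆ N.E ∧ ((x ∉ I ∧ M.Indep I) ∨
        (x ∈ I ∧ M.Indep (I \ {x}) ∧ ¬ M.Spanning (I \ {x}))))

/-- `M` is (isomorphic to) `P_m`, the truncation to rank `m` of the direct sum of two
`m`-element circuits. -/
def IsPMat {α : Type*} (M : Matroid α) (m : ℕ) : Prop :=
  ∃ U₁ U₂ S : Matroid α, IsCircuitMatroidOf U₁ m ∧ IsCircuitMatroidOf U₂ m ∧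
    IsDirectSumOf S U₁ U₂ ∧ IsTruncationOf M S m

/-- `M` is (isomorphic to) `P'_n`, the truncation to rank `n` of the parallel connection,
at a common element, of two `n`-element circuits. -/
def IsP'Mat {α : Type*} (M : Matroid α) (n : ℕ) : Prop :=
  ∃ (U₁ U₂ S : Matroid α) (x : α), IsCircuitMatroidOf U₁ n ∧ IsCircuitMatroidOf U₂ n ∧
    IsParallelConnOf S U₁ U₂ x ∧ IsTruncationOf M S n

/-- `M` is (isomorphic to) `A_n = P'_n + x`. -/
def IsAMat {α : Type*} (M : Matroid α) (n : ℕ) : Prop :=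
  ∃ (N : Matroid α) (x : α), IsP'Mat N n ∧ IsFreeExtOf M N x

/-- `M` is (isomorphic to) `B_{n,k} = T_n(U_{n-1,n} ⊕ U_{n-1,n} ⊕ U_{k-1,k})`. -/
def IsBMat {α : Type*} (M : Matroid α) (n k : ℕ) : Prop :=
  ∃ U₁ U₂ U₃ S₁ S₂ : Matroid α, IsCircuitMatroidOf U₁ n ∧ IsCircuitMatroidOf U₂ n ∧
    IsUniformOf U₃ (k - 1) k ∧ IsDirectSumOf S₁ U₁ U₂ ∧ IsDirectSumOf S₂ S₁ U₃ ∧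
    IsTruncationOf M S₂ n

/-- `M` is (isomorphic to) `C_{n+k,k}`, the dual of `B_{n,k}`. -/
def IsCMat {α : Type*} (M : Matroid α) (n k : ℕ) : Prop := IsBMat M✶ n k

/-- `M` is (isomorphic to) `D_n = (P_{n-1} ⊕ U_{1,1}) + x`. -/
def IsDMat {α : Type*} (M : Matroid α) (n : ℕ) : Prop :=
  ∃ (P U S : Matroid α) (x : α), IsPMat P (n - 1) ∧ IsUniformOf U 1 1 ∧
    IsDirectSumOf S P U ∧ IsFreeExtOf M S x

/-- `M` is (isomorphic to) `E_n`, the dual of `D_n`. -/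
def IsEMat {α : Type*} (M : Matroid α) (n : ℕ) : Prop := IsDMat M✶ n

/-- `M` is (isomorphic to) the rank-3 wheel `W_3`, the cycle matroid of `K₄`: six elements,
rank 3, whose dependent 3-sets are the four triangles of `K₄`. -/
def IsWheel3 {α : Type*} (M : Matroid α) : Prop :=
  ∃ a b c d e f : α, ({a, b, c, d, e, f} : Set α).ncard = 6 ∧
    M.E = {a, b, c, d, e, f} ∧
    ∀ X ⊆ M.E, (M.Indep X ↔ X.ncard ≤ 3 ∧
      X ≠ {a, b, f} ∧ X ≠ {a, c, e} ∧ X ≠ {b, c, d} ∧ X ≠ {d, e, f})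

/-- `M` is (isomorphic to) the rank-3 whirl `W^3`, obtained from `W_3` by relaxing a
circuit-hyperplane: six elements, rank 3, with exactly three dependent 3-sets. -/
def IsWhirl3 {α : Type*} (M : Matroid α) : Prop :=
  ∃ a b c d e f : α, ({a, b, c, d, e, f} : Set α).ncard = 6 ∧
    M.E = {a, b, c, d, e, f} ∧
    ∀ X ⊆ M.E, (M.Indep X ↔ X.ncard ≤ 3 ∧
      X ≠ {a, b, f} ∧ X ≠ {a, c, e} ∧ X ≠ {b, c, d})

/-- `M` is (isomorphic to) `R_4`: the parallel extension, at `x`, of the rank-4 matroid on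
six elements whose ground set is the union of two 4-element circuits `{x,y,p,q}` and
`{x,y,u,v}` meeting in the independent set `{x,y}`, these circuits being its only
nonspanning circuits. -/
def IsR4Mat {α : Type*} (M : Matroid α) : Prop :=
  ∃ (S U : Matroid α) (x x' y p q u v : α),
    ({x, x', y, p, q, u, v} : Set α).ncard = 7 ∧
    S.E = {x, y, p, q, u, v} ∧
    (∀ X ⊆ S.E, (S.Indep X ↔ X.ncard ≤ 4 ∧
        ¬ ({x, y, p, q} : Set α) ⊆ X ∧ ¬ ({x, y, u, v} : Set α) ⊆ X)) ∧
    U.E = {x, x'} ∧ (∀ B, U.IsBase B ↔ (B = {x} ∨ B = {x'})) ∧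
    IsParallelConnOf M S U x

/-- `M` is (isomorphic to) `R_3`, the dual of `R_4`. -/
def IsR3Mat {α : Type*} (M : Matroid α) : Prop := IsR4Mat M✶

/-- `M` is isomorphic to a matroid in the list `E` of excluded minors of `L`. -/
def InExcludedList {α : Type*} (M : Matroid α) : Prop :=
  (∃ n, 3 ≤ n ∧ IsAMat M n) ∨
  (∃ n k, 2 ≤ k ∧ k ≤ n ∧ (IsBMat M n k ∨ IsCMat M n k)) ∨
  (∃ n, 4 ≤ n ∧ (IsDMat M n ∨ IsEMat M n)) ∨
  IsWheel3 M ∨ IsWhirl3 M ∨ IsR3Mat M ∨ IsR4Mat M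

/-- `M` is an excluded minor of the class `L` of lattice path matroids. -/
def IsExcludedMinorOfLPM {α : Type*} (M : Matroid α) : Prop :=
  M.Finite ∧ ¬ IsLPM M ∧ ∀ N : Matroid α, N.IsMinorOf M → N ≠ M → IsLPM N

/-!
If some position `c` is not straddled by any interval (every `J_j` lies entirely before `c` or
entirely from `c` on), then a set is independent as soon as its two halves are, so no circuit
crosses `c`; the three conditions say exactly that every cut `0 < c < n` is straddled.
Conversely, given positions `p < q`, let `s` be the last interval starting at or before `p` and
`t ≥ s` one with `a_t < q ≤ b_t`. The `r + 1` positions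
`a_0, …, a_{s-1}, p, a_{s+1}, …, a_t, q, b_{t+1}, …, b_{r-1}` are dependent, but deleting `q`
leaves a transversal slot by slot, and so does deleting `p` once `a_{s+1}, …, a_t, q` move one
slot down (this is where `a_{j+1} ≤ b_j` is used). Every circuit inside them therefore contains
`p` and `q`.
-/

namespace Matroid

variable {α : Type*} {M : Matroid α} {C D X : Set α} {x y : α}

lemma isCircuit'_iff : M.IsCircuit' C ↔ M.IsCircuit C :=
  ⟨fun h => ⟨h.1, fun _ hD hDC => (h.2 _ hD hDC).symm.subset⟩,
    fun h => ⟨h.1, fun _ hD hDC => hDC.antisymm (h.2 hD hDC)⟩⟩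

lemma ConnTo.symm (h : M.ConnTo x y) : M.ConnTo y x := by
  rcases h with ⟨rfl, hx⟩ | ⟨C, hC, hxC, hyC⟩
  exacts [Or.inl ⟨rfl, hx⟩, Or.inr ⟨C, hC, hyC, hxC⟩]

lemma exists_isCircuit'_of_dep_of_indep_diff (hD : M.Dep D) (hx : M.Indep (D \ {x}))
    (hy : M.Indep (D \ {y})) : ∃ C, M.IsCircuit' C ∧ x ∈ C ∧ y ∈ C := by
  obtain ⟨C, hCD, hC⟩ := hD.exists_isCircuit_subset
  refine ⟨C, isCircuit'_iff.2 hC, ?_, ?_⟩ <;> by_contra h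
  · exact hC.not_indep (hx.subset (subset_sdiff_singleton hCD h))
  · exact hC.not_indep (hy.subset (subset_sdiff_singleton hCD h))

lemma not_connTo_of_indep_inter_diff
    (hX : ∀ I ⊆ M.E, M.Indep (I ∩ X) → M.Indep (I \ X) → M.Indep I) (hx : x ∈ X)
    (hy : y ∉ X) : ¬ M.ConnTo x y := by
  rintro (⟨rfl, -⟩ | ⟨C, hC, hxC, hyC⟩)
  · exact hy hx
  rw [isCircuit'_iff] at hC
  exact hC.not_indep <| hX C hC.subset_ground
    (hC.ssubset_indep ⟨inter_subset_left, fun h => hy (h hyC).2⟩)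
    (hC.ssubset_indep ⟨sdiff_subset, fun h => (h hxC).2 hx⟩)

end Matroid

section Transversal

variable {α : Type*} {r : ℕ} {J : Fin r → Set α} {I X : Set α}

lemma IsPartialTransversal.ncard_le (h : IsPartialTransversal J X) : X.ncard ≤ r := by
  obtain ⟨f, hf, -⟩ := h
  simpa using ncard_le_ncard_of_injOn f (fun _ _ => mem_univ _) hf

lemma isPartialTransversal_range [Nonempty (Fin r)] {g : Fin r → α} (hg : g.Injective)
    (hJ : ∀ j, g j ∈ J j) : IsPartialTransversal J (range g) := by
  refine ⟨Function.invFun g, ?_, ?_⟩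
  · rintro _ ⟨i, rfl⟩ _ ⟨j, rfl⟩ h
    rw [Function.leftInverse_invFun hg i, Function.leftInverse_invFun hg j] at h
    rw [h]
  · rintro _ ⟨j, rfl⟩
    rw [Function.leftInverse_invFun hg j]
    exact hJ j

lemma IsPartialTransversal.of_inter_of_diff (hJ : ∀ i, J i ⊆ X ∨ Disjoint (J i) X)
    (h₁ : IsPartialTransversal J (I ∩ X)) (h₂ : IsPartialTransversal J (I \ X)) :
    IsPartialTransversal J I := by
  classical
  obtain ⟨f₁, hf₁, hJ₁⟩ := h₁
  obtain ⟨f₂, hf₂, hJ₂⟩ := h₂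
  have hne : ∀ x ∈ I ∩ X, ∀ y ∈ I \ X, f₁ x ≠ f₂ y := by
    intro x hx y hy h
    rcases hJ (f₁ x) with hsub | hdisj
    · exact hy.2 (hsub (h ▸ hJ₂ y hy))
    · exact hdisj.ne_of_mem (hJ₁ x hx) hx.2 rfl
  refine ⟨fun x => if x ∈ X then f₁ x else f₂ x, fun x hx y hy hxy => ?_, fun x hx => ?_⟩
  · by_cases hxX : x ∈ X <;> by_cases hyX : y ∈ X <;>
      simp only [hxX, hyX, if_true, if_false] at hxy
    · exact hf₁ ⟨hx, hxX⟩ ⟨hy, hyX⟩ hxy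
    · exact (hne x ⟨hx, hxX⟩ y ⟨hy, hyX⟩ hxy).elim
    · exact (hne y ⟨hy, hyX⟩ x ⟨hx, hxX⟩ hxy.symm).elim
    · exact hf₂ ⟨hx, hxX⟩ ⟨hy, hyX⟩ hxy
  · by_cases hxX : x ∈ X <;> simp only [hxX, if_true, if_false]
    exacts [hJ₁ x ⟨hx, hxX⟩, hJ₂ x ⟨hx, hxX⟩]

variable {M : Matroid α}

lemma IsPresentationOf.ncard_le_of_indep (hJ : IsPresentationOf J M) (hI : M.Indep I) :
    I.ncard ≤ r :=
  ((hJ.2 I hI.subset_ground).1 hI).ncard_le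

lemma IsPresentationOf.not_connTo (hJ : IsPresentationOf J M)
    (hX : ∀ i, J i ⊆ X ∨ Disjoint (J i) X) {x y : α} (hx : x ∈ X) (hy : y ∉ X) :
    ¬ M.ConnTo x y := by
  refine Matroid.not_connTo_of_indep_inter_diff (fun I hI h₁ h₂ => ?_) hx hy
  rw [hJ.2 _ (inter_subset_left.trans hI)] at h₁
  rw [hJ.2 _ (sdiff_subset.trans hI)] at h₂
  exact (hJ.2 I hI).2 (h₁.of_inter_of_diff hX h₂)

end Transversal

lemma Fin.injective_insertNth {β : Type*} {r : ℕ} {x : Fin r → β} (hx : x.Injective) {b : β}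
    (hb : b ∉ range x) (i : Fin (r + 1)) :
    (Fin.insertNth (α := fun _ => β) i b x).Injective := by
  intro k k' h
  have hi : ∀ k, k = i ∨ ∃ j, k = i.succAbove j := i.eq_self_or_eq_succAbove
  rcases hi k with rfl | ⟨j, rfl⟩ <;> rcases hi k' with rfl | ⟨j', rfl⟩ <;>
    simp only [Fin.insertNth_apply_same, Fin.insertNth_apply_succAbove] at h
  · rfl
  · exact (hb ⟨j', h.symm⟩).elim
  · exact (hb ⟨j, h⟩).elim
  · rw [hx h]

namespace IntervalPres

variable {α : Type*} {M : Matroid α} {n r : ℕ} (P : IntervalPres M n r)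

lemma e_mem (i : Fin n) : P.e i ∈ M.E := P.ground ▸ mem_range_self i

lemma not_isConnected_of_cut {x y : Fin n} (hxy : x < y)
    (hcut : ∀ j, P.b j < y ∨ y ≤ P.a j) : ¬ M.IsConnected := by
  refine fun hM => P.pres.not_connTo (X := P.e '' Iio y) (fun j => ?_) (mem_image_of_mem _ hxy)
    (fun h => lt_irrefl y (P.inj.mem_set_image.1 h)) (hM.2 (P.e_mem x) (P.e_mem y))
  rcases hcut j with h | h
  · exact Or.inl (image_mono fun m hm => hm.2.trans_lt h)
  · exact Or.inr ((disjoint_image_iff P.inj).2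
      (disjoint_left.2 fun m hm hm' => (h.trans hm.1).not_gt hm'))

lemma indep_image_range {x : Fin r → Fin n} (hx : x.Injective)
    (hxJ : ∀ j, x j ∈ Icc (P.a j) (P.b j)) : M.Indep (P.e '' range x) := by
  cases isEmpty_or_nonempty (Fin r)
  · simp [range_eq_empty]
  rw [← range_comp]
  exact (P.pres.2 _ (range_subset_iff.2 fun j => P.e_mem _)).2
    (isPartialTransversal_range (P.inj.comp hx) fun j => mem_image_of_mem _ (hxJ j))

lemma exists_isCircuit'_of_succAbove {z : Fin (r + 1) → Fin n} (hz : z.Injective)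
    {k₁ k₂ : Fin (r + 1)} (h₁ : ∀ j, z (k₁.succAbove j) ∈ Icc (P.a j) (P.b j))
    (h₂ : ∀ j, z (k₂.succAbove j) ∈ Icc (P.a j) (P.b j)) :
    ∃ C, M.IsCircuit' C ∧ P.e (z k₁) ∈ C ∧ P.e (z k₂) ∈ C := by
  have hdel : ∀ k, (∀ j, z (k.succAbove j) ∈ Icc (P.a j) (P.b j)) →
      M.Indep (P.e '' range z \ {P.e (z k)}) := by
    refine fun k hk => (P.indep_image_range (hz.comp k.succAbove_right_injective) hk).subset ?_
    rintro _ ⟨⟨_, ⟨i, rfl⟩, rfl⟩, hi⟩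
    obtain ⟨j, rfl⟩ := Fin.exists_succAbove_eq (y := k) (x := i) (by rintro rfl; exact hi rfl)
    exact mem_image_of_mem _ (mem_range_self j)
  refine Matroid.exists_isCircuit'_of_dep_of_indep_diff ⟨fun hI => ?_, ?_⟩
    (hdel k₁ h₁) (hdel k₂ h₂)
  · have := P.pres.ncard_le_of_indep hI
    rw [ncard_image_of_injective _ P.inj, ncard_range_of_injective hz, Nat.card_eq_fintype_card,
      Fintype.card_fin] at this
    omega
  · exact image_subset_iff.2 fun i _ => P.e_mem i

lemma le_b_of_forall_gt_le_a (hr : 0 < r)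
    (h1 : (P.b ⟨r - 1, Nat.sub_one_lt_of_lt hr⟩).1 = n - 1)
    (hov : ∀ i (hi : i + 1 < r), P.a ⟨i + 1, hi⟩ ≤ P.b ⟨i, Nat.lt_of_succ_lt hi⟩)
    {s : Fin r} {m : Fin n} (hm : ∀ j, s < j → m ≤ P.a j) : m ≤ P.b s := by
  by_cases hs : s.1 + 1 < r
  · exact (hm ⟨s + 1, hs⟩ (Fin.lt_def.2 (Nat.lt_succ_self _))).trans (hov s hs)
  · rw [show s = ⟨r - 1, by omega⟩ from Fin.ext (by simp only; omega)]
    omega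

lemma exists_greatest_a_le (hr : 0 < r) (h0 : (P.a ⟨0, hr⟩).1 = 0)
    (h1 : (P.b ⟨r - 1, Nat.sub_one_lt_of_lt hr⟩).1 = n - 1)
    (hov : ∀ i (hi : i + 1 < r), P.a ⟨i + 1, hi⟩ ≤ P.b ⟨i, Nat.lt_of_succ_lt hi⟩)
    (m : Fin n) : ∃ s, P.a s ≤ m ∧ m ≤ P.b s ∧ ∀ j, s < j → m < P.a j := by
  obtain ⟨s, hs, hmax⟩ := (Finset.univ.filter fun j => P.a j ≤ m).exists_max_image id
    ⟨⟨0, hr⟩, Finset.mem_filter.2 ⟨Finset.mem_univ _, Fin.le_def.2 (by omega)⟩⟩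
  have hgt : ∀ j, s < j → m < P.a j :=
    fun j hsj => not_le.1 fun h => (hmax j (by simpa using h)).not_gt hsj
  exact ⟨s, (Finset.mem_filter.1 hs).2,
    P.le_b_of_forall_gt_le_a hr h1 hov fun j hj => (hgt j hj).le, hgt⟩

lemma exists_a_lt_le_b (hr : 0 < r) (h1 : (P.b ⟨r - 1, Nat.sub_one_lt_of_lt hr⟩).1 = n - 1)
    (hov : ∀ i (hi : i + 1 < r), P.a ⟨i + 1, hi⟩ ≤ P.b ⟨i, Nat.lt_of_succ_lt hi⟩)
    {s : Fin r} {m : Fin n} (hs : P.a s < m) : ∃ t, s ≤ t ∧ P.a t < m ∧ m ≤ P.b t := by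
  obtain ⟨t, ht, hmax⟩ :=
    (Finset.univ.filter fun j => P.a j < m).exists_max_image id ⟨s, by simpa using hs⟩
  refine ⟨t, hmax s (by simpa using hs), (Finset.mem_filter.1 ht).2,
    P.le_b_of_forall_gt_le_a hr h1 hov fun j hj => not_lt.1 fun h => ?_⟩
  exact (hmax j (by simpa using h)).not_gt hj

lemma exists_transversal_through {s t : Fin r} {p q : Fin n} (hst : s ≤ t) (hpq : p < q)
    (hsp : P.a s ≤ p) (hps : p ≤ P.b s) (hs : ∀ j, s < j → p < P.a j) (htq : P.a t < q)
    (hqt : q ≤ P.b t) :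
    ∃ x : Fin r → Fin n, x.Injective ∧ x s = p ∧ q ∉ range x ∧
      (∀ j, x j ∈ Icc (P.a j) (P.b j)) ∧ ∀ j, s < j → j ≤ t → x j = P.a j := by
  refine ⟨fun j => if j = s then p else if j ≤ t then P.a j else P.b j, ?_, by simp, ?_,
    fun j => ?_, fun j hj hjt => by simp [hj.ne', hjt]⟩
  · refine StrictMono.injective fun i j hij => ?_
    have := P.ha hij
    have := P.hb hij
    have := P.hab i
    have : i < s → P.a i < P.a s := fun h => P.ha h
    have : s < j → P.b s < P.b j := fun h => P.hb h
    have := hs j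
    split_ifs <;> omega
  · rintro ⟨j, hj⟩
    have : j ≤ t → P.a j ≤ P.a t := fun h => P.ha.monotone h
    have : t < j → P.b t < P.b j := fun h => P.hb h
    have := P.hab j
    dsimp only at hj
    split_ifs at hj <;> omega
  · dsimp only
    split_ifs with h
    · exact h ▸ ⟨hsp, hps⟩
    · exact ⟨le_rfl, P.hab j⟩
    · exact ⟨P.hab j, le_rfl⟩

lemma exists_isCircuit'_of_lt (hr : 0 < r) (h0 : (P.a ⟨0, hr⟩).1 = 0)
    (h1 : (P.b ⟨r - 1, Nat.sub_one_lt_of_lt hr⟩).1 = n - 1)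
    (hov : ∀ i (hi : i + 1 < r), P.a ⟨i + 1, hi⟩ ≤ P.b ⟨i, Nat.lt_of_succ_lt hi⟩)
    {p q : Fin n} (hpq : p < q) : ∃ C, M.IsCircuit' C ∧ P.e p ∈ C ∧ P.e q ∈ C := by
  obtain ⟨s, hsp, hps, hs⟩ := P.exists_greatest_a_le hr h0 h1 hov p
  obtain ⟨t, hst, htq, hqt⟩ := P.exists_a_lt_le_b hr h1 hov (hsp.trans_lt hpq)
  obtain ⟨x, hx, hxs, hqx, hxJ, hxa⟩ := P.exists_transversal_through hst hpq hsp hps hs htq hqt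
  have hz := Fin.injective_insertNth hx hqx t.succ
  set z := Fin.insertNth (α := fun _ => Fin n) t.succ q x
  have hzx : ∀ j, z (t.succ.succAbove j) = x j := Fin.insertNth_apply_succAbove _ _ _
  have hzq : z t.succ = q := Fin.insertNth_apply_same _ _ _
  have hzp : z s.castSucc = p := by rw [← Fin.succAbove_succ_of_le t s hst, hzx, hxs]
  have hzs : ∀ j, z (s.castSucc.succAbove j) ∈ Icc (P.a j) (P.b j) := by
    intro j
    rcases lt_or_ge j s with hjs | hsj
    · rw [Fin.succAbove_castSucc_of_lt _ _ hjs,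
        ← Fin.succAbove_succ_of_le t j (hjs.le.trans hst), hzx]
      exact hxJ j
    rw [Fin.succAbove_castSucc_of_le _ _ hsj]
    rcases lt_trichotomy j t with hjt | rfl | htj
    · have hj : j.1 + 1 < r := by omega
      have hsucc : j.succ = t.succ.succAbove ⟨j + 1, hj⟩ := by
        rw [Fin.succAbove_succ_of_le t _ (Fin.le_def.2 (show j.1 + 1 ≤ t.1 by omega))]
        rfl
      rw [hsucc, hzx, hxa _ (Fin.lt_def.2 (show s.1 < j.1 + 1 by omega))
        (Fin.le_def.2 (show j.1 + 1 ≤ t.1 by omega))]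
      exact ⟨P.ha.monotone (Fin.le_def.2 (show j.1 ≤ j.1 + 1 by omega)), hov j hj⟩
    · rw [hzq]
      exact ⟨htq.le, hqt⟩
    · rw [← Fin.succAbove_succ_of_lt t j htj, hzx]
      exact hxJ j
  obtain ⟨C, hC, hpC, hqC⟩ :=
    P.exists_isCircuit'_of_succAbove hz hzs fun j => (hzx j).symm ▸ hxJ j
  rw [hzp] at hpC
  rw [hzq] at hqC
  exact ⟨C, hC, hpC, hqC⟩

end IntervalPres

section Statements

variable {α : Type*}

theorem connected_iff_interval_presentation
    (M : Matroid α) (n r : ℕ) (P : IntervalPres M n r) (hr : 0 < r) :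
    M.IsConnected ↔
      ((P.a ⟨0, hr⟩).1 = 0 ∧ (P.b ⟨r - 1, by omega⟩).1 = n - 1 ∧
        ∀ (i : ℕ) (hi : i + 1 < r), P.a ⟨i + 1, hi⟩ ≤ P.b ⟨i, by omega⟩) := by
  constructor
  · intro hM
    refine ⟨Nat.eq_zero_of_not_pos fun h => ?_, le_antisymm (by omega) (not_lt.1 fun h => ?_),
      fun i hi => not_lt.1 fun h => ?_⟩
    · exact P.not_isConnected_of_cut (x := ⟨0, h.trans (P.a _).2⟩) h
        (fun j => Or.inr (P.ha.monotone (Nat.zero_le j.1))) hM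
    · exact P.not_isConnected_of_cut (y := ⟨n - 1, by omega⟩) h
        (fun j => Or.inl ((P.hb.monotone (Nat.le_sub_one_of_lt j.2)).trans_lt h)) hM
    · refine P.not_isConnected_of_cut h (fun j => (lt_or_ge j ⟨i + 1, hi⟩).imp (fun hj => ?_)
        (P.ha.monotone ·)) hM
      exact (P.hb.monotone (Nat.le_of_lt_succ hj)).trans_lt h
  · rintro ⟨h0, h1, hov⟩
    refine ⟨⟨_, P.e_mem ⟨0, (P.a ⟨0, hr⟩).pos⟩⟩, fun x y hx hy => ?_⟩
    rw [← P.ground] at hx hy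
    obtain ⟨i, rfl⟩ := hx
    obtain ⟨j, rfl⟩ := hy
    rcases lt_trichotomy i j with h | rfl | h
    · exact Or.inr (P.exists_isCircuit'_of_lt hr h0 h1 hov h)
    · exact Or.inl ⟨rfl, P.e_mem i⟩
    · exact Matroid.ConnTo.symm (Or.inr (P.exists_isCircuit'_of_lt hr h0 h1 hov h))

end Statements
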